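/- For z > 0 define E₂(z) := −(1/2) ∫₀^{∞} e(−t/z) (1+t)^{−1/2} dt, where the integral is an improper Riemann integral. Then E₂ is smooth on (0, ∞), and for every integer n ≥ 0 there is a constant C_n such that |E₂^{(n)}(z)| ≤ C_n · z^{1−n} for all 0 < z ≤ 1. -/

import Mathlib

open MeasureTheory intervalIntegral Filter

/-- `e(x) = exp(2πix)`. -/
noncomputable def e (x : ℝ) : ℂ := Complex.exp (2 * Real.pi * Complex.I * x)

/-!
Integrating by parts once against `e(-t/z)`, whose antiderivative is `(iz/2π) e(-t/z)`, turns the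
conditionally convergent integral into an absolutely convergent one, and the substitution
`t = z s` gives `E₂(z) = iz/(4π) - iz²/(8π) K₀(z)` with
`Kₘ(z) = ∫₀^∞ e(-s) sᵐ (1 + z s)^(-m-3/2) ds`.
Differentiating under the integral sign gives `Kₘ' = -(m + 3/2) Kₘ₊₁`, and scaling gives
`|Kₘ(z)| ≤ Bₘ z^(-m-1)`. Hence the finite sums of terms `c zʲ` with `j ≥ d` and `c zʲ Kₘ(z)`
with `j - m - 1 ≥ d` are `O(z^d)` on `(0, 1]`, and `d/dz` maps them to such sums for `d - 1`;
`E₂` is one of them for `d = 1`.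
-/

open Set

lemma e_zero : e 0 = 1 := by
  simp [e]

lemma norm_e (x : ℝ) : ‖e x‖ = 1 := by
  simp [e, Complex.norm_exp]

lemma norm_e_mul_ofReal (x : ℝ) {r : ℝ} (hr : 0 ≤ r) : ‖e x * (r : ℂ)‖ = r := by
  rw [norm_mul, norm_e, one_mul, Complex.norm_real, Real.norm_of_nonneg hr]

lemma continuous_e : Continuous e := by
  unfold e; fun_prop

lemma hasDerivAt_e (x : ℝ) : HasDerivAt e (2 * Real.pi * Complex.I * e x) x := by
  have h := ((hasDerivAt_id x).ofReal_comp.const_mul (2 * Real.pi * Complex.I : ℂ)).cexp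
  simp only [id, Complex.ofReal_one, mul_one] at h
  exact h.congr_deriv (mul_comm _ _)

lemma hasDerivAt_mul_e_neg_div {z : ℝ} (hz : z ≠ 0) (t : ℝ) :
    HasDerivAt (fun x : ℝ => z * Complex.I / (2 * Real.pi) * e (-(x / z))) (e (-(t / z))) t := by
  have hC : z * Complex.I / (2 * Real.pi) * (-(1 / z) : ℝ) * (2 * Real.pi * Complex.I) = 1 := by
    have : (z : ℂ) ≠ 0 := by exact_mod_cast hz
    push_cast
    field_simp
    simp
  refine (((hasDerivAt_e _).scomp t ((hasDerivAt_id t).div_const z).neg).const_mul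
    _).congr_deriv ?_
  rw [Complex.real_smul, ← mul_assoc, ← mul_assoc, hC, one_mul]
  rfl

lemma hasDerivAt_ofReal_pow (j : ℕ) (z : ℝ) :
    HasDerivAt (fun x : ℝ => (x : ℂ) ^ j) (j * (z : ℂ) ^ (j - 1)) z :=
  (hasDerivAt_pow j (z : ℂ)).comp_ofReal

lemma continuousOn_pow_mul_one_add_mul_rpow {z : ℝ} (hz : 0 ≤ z) (n : ℕ) (c : ℝ) :
    ContinuousOn (fun s : ℝ => s ^ n * (1 + z * s) ^ c) (Ici 0) :=
  (continuousOn_pow n).mul <| ContinuousOn.rpow_const (by fun_prop) fun s (hs : 0 ≤ s) =>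
    Or.inl (by positivity)

lemma continuousOn_one_add_rpow (c : ℝ) : ContinuousOn (fun t : ℝ => (1 + t) ^ c) (Ici 0) := by
  simpa using continuousOn_pow_mul_one_add_mul_rpow zero_le_one 0 c

lemma integrableOn_pow_mul_one_add_mul_rpow {z : ℝ} (hz : 0 < z) (n : ℕ) {c : ℝ}
    (hc : n + c < -1) :
    IntegrableOn (fun s : ℝ => s ^ n * (1 + z * s) ^ c) (Ioi 0) := by
  have hcont := continuousOn_pow_mul_one_add_mul_rpow hz.le n c
  have h_Ioc : IntegrableOn (fun s : ℝ => s ^ n * (1 + z * s) ^ c) (Ioc 0 1) :=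
    ((hcont.mono Icc_subset_Ici_self).integrableOn_Icc).mono_set Ioc_subset_Icc_self
  have h_Ioi : IntegrableOn (fun s : ℝ => s ^ n * (1 + z * s) ^ c) (Ioi 1) := by
    refine Integrable.mono' ((integrableOn_Ioi_rpow_of_lt hc one_pos).const_mul (z ^ c))
      ((hcont.mono fun s (hs : 1 < s) => mem_Ici.2 (by linarith)).aestronglyMeasurable
        measurableSet_Ioi) ?_
    filter_upwards [ae_restrict_mem measurableSet_Ioi] with s (hs : 1 < s)
    have hs0 : 0 < s := by linarith
    rw [Real.norm_of_nonneg (by positivity)]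
    calc s ^ n * (1 + z * s) ^ c ≤ s ^ n * (z * s) ^ c := by
          refine mul_le_mul_of_nonneg_left (Real.rpow_le_rpow_of_nonpos (by positivity)
            (by linarith) ?_) (by positivity)
          linarith [(n.cast_nonneg : (0 : ℝ) ≤ n)]
      _ = z ^ c * s ^ ((n : ℝ) + c) := by
          rw [Real.mul_rpow hz.le hs0.le, Real.rpow_add hs0, Real.rpow_natCast]; ring
  simpa [Ioc_union_Ioi_eq_Ioi zero_le_one] using h_Ioc.union h_Ioi

lemma integral_pow_mul_one_add_mul_rpow {z : ℝ} (hz : 0 < z) (n : ℕ) (c : ℝ) :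
    ∫ s in Ioi (0 : ℝ), s ^ n * (1 + z * s) ^ c
      = (∫ u in Ioi (0 : ℝ), u ^ n * (1 + u) ^ c) / z ^ (n + 1) := by
  have h := integral_comp_mul_left_Ioi (fun u : ℝ => u ^ n * (1 + u) ^ c) 0 hz
  simp only [mul_zero, smul_eq_mul] at h
  have hscale : ∀ s ∈ Ioi (0 : ℝ),
      s ^ n * (1 + z * s) ^ c = (z ^ n)⁻¹ * ((z * s) ^ n * (1 + z * s) ^ c) := by
    intro s _
    field_simp
    ring
  rw [setIntegral_congr_fun measurableSet_Ioi hscale, MeasureTheory.integral_const_mul, h,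
    pow_succ]
  field_simp

lemma hasDerivAt_ofReal_one_add_rpow (c : ℝ) {t : ℝ} (ht : -1 < t) :
    HasDerivAt (fun x : ℝ => (((1 + x) ^ c : ℝ) : ℂ)) ((c * (1 + t) ^ (c - 1) : ℝ) : ℂ) t :=
  (((hasDerivAt_id t).const_add 1).rpow_const (Or.inl (by simp; linarith))).ofReal_comp
    |>.congr_deriv (by simp)

lemma hasDerivAt_pow_mul_one_add_mul_rpow {s x : ℝ} (n : ℕ) (c : ℝ) (h : 0 < 1 + x * s) :
    HasDerivAt (fun y : ℝ => s ^ n * (1 + y * s) ^ c)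
      (c * s ^ (n + 1) * (1 + x * s) ^ (c - 1)) x := by
  have hlin : HasDerivAt (fun y : ℝ => 1 + y * s) s x := by
    simpa using (hasDerivAt_mul_const s).const_add 1
  exact ((hlin.rpow_const (p := c) (Or.inl h.ne')).const_mul (s ^ n)).congr_deriv (by ring)

lemma tendsto_ofReal_one_add_rpow_mul_e_atTop {c : ℝ} (hc : c < 0) (C : ℂ) (f : ℝ → ℝ) :
    Tendsto (fun T : ℝ => (((1 + T) ^ c : ℝ) : ℂ) * (C * e (f T))) atTop (nhds 0) := by
  refine squeeze_zero_norm' (a := fun T => (1 + T) ^ c * ‖C‖) ?_ ?_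
  · filter_upwards [eventually_ge_atTop 0] with T hT
    rw [norm_mul, norm_mul, norm_e, mul_one, Complex.norm_real,
      Real.norm_of_nonneg (by positivity)]
  · simpa using ((tendsto_rpow_neg_atTop (neg_pos.2 hc)).comp
      (tendsto_atTop_add_const_left _ 1 tendsto_id)).mul_const ‖C‖

theorem tendsto_intervalIntegral_mul_deriv_atTop {A : Type*} [NormedRing A] [NormedAlgebra ℝ A]
    [CompleteSpace A] {u v u' v' : ℝ → A} {a : ℝ} {L : A}
    (hu : ∀ x ∈ Ici a, HasDerivAt u (u' x) x) (hv : ∀ x ∈ Ici a, HasDerivAt v (v' x) x)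
    (hu' : ContinuousOn u' (Ici a)) (hv' : ContinuousOn v' (Ici a))
    (hu'v : IntegrableOn (u' * v) (Ioi a)) (h_infty : Tendsto (u * v) atTop (nhds L)) :
    Tendsto (fun b => ∫ x in a..b, u x * v' x) atTop
      (nhds (L - u a * v a - ∫ x in Ioi a, u' x * v x)) := by
  refine ((h_infty.sub_const (u a * v a)).sub
    (intervalIntegral_tendsto_integral_Ioi a hu'v tendsto_id)).congr' ?_
  filter_upwards [eventually_ge_atTop a] with b hb
  exact (integral_mul_deriv_eq_deriv_mul (fun x hx => hu x (uIcc_of_le hb ▸ hx).1)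
    (fun x hx => hv x (uIcc_of_le hb ▸ hx).1)
    ((hu'.mono Icc_subset_Ici_self).intervalIntegrable_of_Icc hb)
    ((hv'.mono Icc_subset_Ici_self).intervalIntegrable_of_Icc hb)).symm

namespace E2

lemma continuousOn_e_neg_mul_pow_mul_one_add_mul_rpow {x : ℝ} (hx : 0 ≤ x) (m : ℕ) (c : ℝ) :
    ContinuousOn (fun s : ℝ => e (-s) * ((s ^ m * (1 + x * s) ^ c : ℝ) : ℂ)) (Ioi 0) :=
  ((continuous_e.comp continuous_neg).continuousOn.mul
    (Complex.continuous_ofReal.comp_continuousOn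
      (continuousOn_pow_mul_one_add_mul_rpow hx m c))).mono Ioi_subset_Ici_self

lemma integrableOn_e_neg_mul_pow_mul_one_add_mul_rpow {x : ℝ} (hx : 0 < x) (m : ℕ) {c : ℝ}
    (hc : m + c < -1) :
    IntegrableOn (fun s : ℝ => e (-s) * ((s ^ m * (1 + x * s) ^ c : ℝ) : ℂ)) (Ioi 0) :=
  (integrableOn_pow_mul_one_add_mul_rpow hx m hc).mono'
    ((continuousOn_e_neg_mul_pow_mul_one_add_mul_rpow hx.le m c).aestronglyMeasurable
      measurableSet_Ioi)
    ((ae_restrict_mem measurableSet_Ioi).mono fun s (hs : 0 < s) =>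
      (norm_e_mul_ofReal _ (by positivity)).le)

noncomputable def K (n : ℕ) (z : ℝ) : ℂ :=
  ∫ s in Ioi (0 : ℝ), e (-s) * ((s ^ n * (1 + z * s) ^ (-(n : ℝ) - 3 / 2) : ℝ) : ℂ)

lemma norm_K_le {z : ℝ} (hz : 0 < z) (n : ℕ) :
    ‖K n z‖ ≤ (∫ u in Ioi (0 : ℝ), u ^ n * (1 + u) ^ (-(n : ℝ) - 3 / 2)) / z ^ (n + 1) := by
  rw [← integral_pow_mul_one_add_mul_rpow hz]
  refine (MeasureTheory.norm_integral_le_integral_norm _).trans_eq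
    (setIntegral_congr_fun measurableSet_Ioi fun s (hs : 0 < s) => ?_)
  exact norm_e_mul_ofReal _ (by positivity)

lemma hasDerivAt_integral_e_neg_mul_pow_mul_one_add_mul_rpow {z : ℝ} (hz : 0 < z) (n : ℕ)
    {c : ℝ} (hc : n + c < -1) :
    HasDerivAt (fun x : ℝ => ∫ s in Ioi (0 : ℝ), e (-s) * ((s ^ n * (1 + x * s) ^ c : ℝ) : ℂ))
      (c * ∫ s in Ioi (0 : ℝ), e (-s) * ((s ^ (n + 1) * (1 + z * s) ^ (c - 1) : ℝ) : ℂ)) z := by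
  have hc0 : c ≤ 0 := by linarith [(n.cast_nonneg : (0 : ℝ) ≤ n)]
  -- on `x > z / 2` the `x`-derivative of the integrand is dominated by its value at `z / 2`
  have key := hasDerivAt_integral_of_dominated_loc_of_deriv_le
    (μ := volume.restrict (Ioi 0)) (x₀ := z)
    (F := fun x s => e (-s) * ((s ^ n * (1 + x * s) ^ c : ℝ) : ℂ))
    (F' := fun x s => (c : ℂ) * (e (-s) * ((s ^ (n + 1) * (1 + x * s) ^ (c - 1) : ℝ) : ℂ)))
    (bound := fun s => ‖c‖ * (s ^ (n + 1) * (1 + z / 2 * s) ^ (c - 1)))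
    (Ioi_mem_nhds (half_lt_self hz))
    (eventually_gt_nhds hz |>.mono fun x hx =>
      (continuousOn_e_neg_mul_pow_mul_one_add_mul_rpow hx.le n c).aestronglyMeasurable
        measurableSet_Ioi)
    (integrableOn_e_neg_mul_pow_mul_one_add_mul_rpow hz n hc)
    (((continuousOn_e_neg_mul_pow_mul_one_add_mul_rpow hz.le (n + 1) _).const_smul
      (c : ℂ)).aestronglyMeasurable measurableSet_Ioi) ?_
    ((integrableOn_pow_mul_one_add_mul_rpow (half_pos hz) _ (by push_cast; linarith)).const_mul _)
    ?_
  · rw [← MeasureTheory.integral_const_mul]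
    exact key.2
  · filter_upwards [ae_restrict_mem measurableSet_Ioi] with s (hs : 0 < s)
    intro x (hx : z / 2 < x)
    have hxs : 0 < 1 + x * s := by nlinarith
    rw [norm_mul, Complex.norm_real, norm_e_mul_ofReal _ (by positivity)]
    exact mul_le_mul_of_nonneg_left (mul_le_mul_of_nonneg_left
      (Real.rpow_le_rpow_of_nonpos (by positivity) (by nlinarith) (by linarith)) (by positivity))
      (norm_nonneg _)
  · filter_upwards [ae_restrict_mem measurableSet_Ioi] with s (hs : 0 < s)
    intro x (hx : z / 2 < x)
    refine (((hasDerivAt_pow_mul_one_add_mul_rpow n c (by nlinarith)).ofReal_comp).const_mul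
      (e (-s))).congr_deriv ?_
    push_cast
    ring

lemma hasDerivAt_K {z : ℝ} (hz : 0 < z) (n : ℕ) :
    HasDerivAt (K n) ((-(n : ℂ) - 3 / 2) * K (n + 1) z) z := by
  have h := hasDerivAt_integral_e_neg_mul_pow_mul_one_add_mul_rpow hz n
    (c := -(n : ℝ) - 3 / 2) (by linarith)
  rw [show -(n : ℝ) - 3 / 2 - 1 = -((n + 1 : ℕ) : ℝ) - 3 / 2 by push_cast; ring] at h
  exact h.congr_deriv (by congr 1; push_cast; ring)

inductive KernelExpansion : ℤ → (ℝ → ℂ) → Prop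
  | monomial (c : ℂ) (j : ℕ) {d : ℤ} (hd : d ≤ j) : KernelExpansion d fun z => c * (z : ℂ) ^ j
  | kernel (c : ℂ) (j m : ℕ) {d : ℤ} (hd : d ≤ j - m - 1) :
      KernelExpansion d fun z => c * (z : ℂ) ^ j * K m z
  | add {d : ℤ} {f g : ℝ → ℂ} :
      KernelExpansion d f → KernelExpansion d g → KernelExpansion d (f + g)

namespace KernelExpansion

theorem exists_hasDerivAt {d : ℤ} {f : ℝ → ℂ} (hf : KernelExpansion d f) :
    ∃ g, KernelExpansion (d - 1) g ∧ ∀ z : ℝ, 0 < z → HasDerivAt f (g z) z := by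
  induction hf with
  | monomial c j hd =>
    exact ⟨_, monomial (c * j) (j - 1) (by omega), fun z _ =>
      ((hasDerivAt_ofReal_pow j z).const_mul c).congr_deriv (by ring)⟩
  | kernel c j m hd =>
    refine ⟨_, add (kernel (c * j) (j - 1) m (by omega))
      (kernel (c * (-(m : ℂ) - 3 / 2)) j (m + 1) (by omega)), fun z hz => ?_⟩
    exact (((hasDerivAt_ofReal_pow j z).const_mul c).mul (hasDerivAt_K hz m)).congr_deriv
      (by simp only [Pi.add_apply]; ring)
  | add _ _ ihf ihg =>
    obtain ⟨f', hf', hf'_deriv⟩ := ihf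
    obtain ⟨g', hg', hg'_deriv⟩ := ihg
    exact ⟨f' + g', add hf' hg', fun z hz => (hf'_deriv z hz).add (hg'_deriv z hz)⟩

theorem exists_norm_le {d : ℤ} {f : ℝ → ℂ} (hf : KernelExpansion d f) :
    ∃ C, ∀ z : ℝ, 0 < z → z ≤ 1 → ‖f z‖ ≤ C * z ^ d := by
  induction hf with
  | @monomial c j d hd =>
    refine ⟨‖c‖, fun z hz hz1 => ?_⟩
    rw [norm_mul, norm_pow, Complex.norm_real, Real.norm_of_nonneg hz.le, ← zpow_natCast]
    exact mul_le_mul_of_nonneg_left (zpow_le_zpow_right_of_le_one₀ hz hz1 hd) (norm_nonneg c)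
  | @kernel c j m d hd =>
    set B := ∫ u in Ioi (0 : ℝ), u ^ m * (1 + u) ^ (-(m : ℝ) - 3 / 2)
    have hB : 0 ≤ B := setIntegral_nonneg measurableSet_Ioi fun u (hu : 0 < u) => by positivity
    refine ⟨‖c‖ * B, fun z hz hz1 => ?_⟩
    rw [norm_mul, norm_mul, norm_pow, Complex.norm_real, Real.norm_of_nonneg hz.le]
    calc ‖c‖ * z ^ j * ‖K m z‖ ≤ ‖c‖ * z ^ j * (B / z ^ (m + 1)) :=
          mul_le_mul_of_nonneg_left (norm_K_le hz m) (by positivity)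
      _ = ‖c‖ * B * z ^ ((j : ℤ) - m - 1) := by
          rw [show (j : ℤ) - m - 1 = j - (m + 1 : ℕ) by push_cast; ring, zpow_sub₀ hz.ne',
            zpow_natCast, zpow_natCast]
          ring
      _ ≤ ‖c‖ * B * z ^ d :=
          mul_le_mul_of_nonneg_left (zpow_le_zpow_right_of_le_one₀ hz hz1 hd) (by positivity)
  | @add d f g _ _ ihf ihg =>
    obtain ⟨C₁, hC₁⟩ := ihf
    obtain ⟨C₂, hC₂⟩ := ihg
    refine ⟨C₁ + C₂, fun z hz hz1 => ?_⟩
    calc ‖(f + g) z‖ ≤ ‖f z‖ + ‖g z‖ := norm_add_le _ _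
      _ ≤ C₁ * z ^ d + C₂ * z ^ d := add_le_add (hC₁ z hz hz1) (hC₂ z hz hz1)
      _ = (C₁ + C₂) * z ^ d := by ring

theorem contDiffOn {d : ℤ} {f : ℝ → ℂ} (hf : KernelExpansion d f) (n : ℕ) :
    ContDiffOn ℝ n f (Ioi 0) := by
  induction n generalizing d f with
  | zero =>
    obtain ⟨g, -, hg⟩ := hf.exists_hasDerivAt
    exact contDiffOn_zero.2 fun z hz => (hg z hz).continuousAt.continuousWithinAt
  | succ n ih =>
    obtain ⟨g, hg, hfg⟩ := hf.exists_hasDerivAt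
    rw [Nat.cast_succ, contDiffOn_succ_iff_deriv_of_isOpen isOpen_Ioi]
    refine ⟨fun z hz => (hfg z hz).differentiableAt.differentiableWithinAt, by simp, ?_⟩
    exact (ih hg).congr fun z hz => (hfg z hz).deriv

theorem exists_eqOn_iteratedDerivWithin {d : ℤ} {f : ℝ → ℂ} (hf : KernelExpansion d f)
    (n : ℕ) :
    ∃ g, KernelExpansion (d - n) g ∧ EqOn (iteratedDerivWithin n f (Ioi 0)) g (Ioi 0) := by
  induction n with
  | zero => exact ⟨f, by simpa using hf, fun z _ => by rw [iteratedDerivWithin_zero]⟩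
  | succ n ih =>
    obtain ⟨g, hg, hfg⟩ := ih
    obtain ⟨g', hg', hgg'⟩ := hg.exists_hasDerivAt
    refine ⟨g', by rwa [Nat.cast_succ, ← sub_sub], fun z (hz : 0 < z) => ?_⟩
    rw [iteratedDerivWithin_succ, derivWithin_congr hfg (hfg hz),
      (hgg' z hz).hasDerivWithinAt.derivWithin (uniqueDiffOn_Ioi 0 z hz)]

end KernelExpansion

noncomputable def explicitE₂ (z : ℝ) : ℂ :=
  Complex.I / (4 * Real.pi) * z - Complex.I / (8 * Real.pi) * z ^ 2 * K 0 z

lemma kernelExpansion_explicitE₂ : KernelExpansion 1 explicitE₂ := by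
  convert KernelExpansion.add (KernelExpansion.monomial (Complex.I / (4 * Real.pi)) 1 (d := 1)
    (by norm_num)) (KernelExpansion.kernel (-(Complex.I / (8 * Real.pi))) 2 0 (by norm_num))
    using 1
  funext z
  simp only [explicitE₂, Pi.add_apply, pow_one]
  ring

lemma integrableOn_e_neg_div_mul_one_add_rpow (z : ℝ) {c : ℝ} (hc : c < -1) :
    IntegrableOn (fun t : ℝ => e (-(t / z)) * (((1 + t) ^ c : ℝ) : ℂ)) (Ioi 0) := by
  have hg : IntegrableOn (fun t : ℝ => (1 + t) ^ c) (Ioi 0) := by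
    simpa using integrableOn_pow_mul_one_add_mul_rpow one_pos 0 (c := c) (by simpa using hc)
  refine hg.mono' ((((continuous_e.comp (by fun_prop)).continuousOn.mul
      (Complex.continuous_ofReal.comp_continuousOn (continuousOn_one_add_rpow _))).mono
      Ioi_subset_Ici_self).aestronglyMeasurable measurableSet_Ioi) ?_
  filter_upwards [ae_restrict_mem measurableSet_Ioi] with t (ht : 0 < t)
  exact (norm_e_mul_ofReal _ (by positivity)).le

lemma integral_e_neg_div_mul_one_add_rpow {z : ℝ} (hz : 0 < z) :
    ∫ t in Ioi (0 : ℝ), e (-(t / z)) * (((1 + t) ^ (-(3 / 2) : ℝ) : ℝ) : ℂ) = z * K 0 z := by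
  have h := integral_comp_mul_left_Ioi
    (fun t : ℝ => e (-(t / z)) * (((1 + t) ^ (-(3 / 2) : ℝ) : ℝ) : ℂ)) 0 hz
  simp only [mul_zero, mul_div_cancel_left₀ _ hz.ne', Complex.real_smul] at h
  simp only [K, pow_zero, one_mul, Nat.cast_zero, neg_zero, zero_sub]
  rw [h, ← mul_assoc, ← Complex.ofReal_mul, mul_inv_cancel₀ hz.ne', Complex.ofReal_one, one_mul]

lemma tendsto_intervalIntegral_e_neg_div_mul_inv_sqrt {z : ℝ} (hz : 0 < z) :
    Tendsto (fun T : ℝ => ∫ t in (0 : ℝ)..T, e (-(t / z)) * ((Real.sqrt (1 + t))⁻¹ : ℂ))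
      atTop (nhds (-2 * explicitE₂ z)) := by
  set C : ℂ := z * Complex.I / (2 * Real.pi)
  set u : ℝ → ℂ := fun t => (((1 + t) ^ (-(1 / 2) : ℝ) : ℝ) : ℂ)
  set u' : ℝ → ℂ := fun t => ((-(1 / 2) * (1 + t) ^ (-(1 / 2) - 1 : ℝ) : ℝ) : ℂ)
  set v : ℝ → ℂ := fun t => C * e (-(t / z))
  have hu'v : u' * v =
      fun t => -(C / 2) * (e (-(t / z)) * (((1 + t) ^ (-(3 / 2) : ℝ) : ℝ) : ℂ)) := by
    funext t
    simp only [u', v, Pi.mul_apply]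
    norm_num
    ring
  have h := tendsto_intervalIntegral_mul_deriv_atTop (u := u) (v := v)
    (fun t (ht : 0 ≤ t) => hasDerivAt_ofReal_one_add_rpow _ (by linarith))
    (fun t _ => hasDerivAt_mul_e_neg_div hz.ne' t)
    (Complex.continuous_ofReal.comp_continuousOn
      ((continuousOn_one_add_rpow _).const_smul (-(1 / 2) : ℝ)))
    ((continuous_e.comp (by fun_prop)).continuousOn)
    (hu'v ▸ (integrableOn_e_neg_div_mul_one_add_rpow z (by norm_num)).const_mul _)
    (tendsto_ofReal_one_add_rpow_mul_e_atTop (by norm_num) C _)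
  have h_tail : ∫ t in Ioi (0 : ℝ), u' t * v t = -(C / 2) * (z * K 0 z) := by
    rw [← integral_e_neg_div_mul_one_add_rpow hz, ← MeasureTheory.integral_const_mul]
    exact congrArg (fun f => ∫ t in Ioi (0 : ℝ), f t) hu'v
  have h_value : 0 - u 0 * v 0 - ∫ t in Ioi (0 : ℝ), u' t * v t = -2 * explicitE₂ z := by
    rw [h_tail]
    simp only [u, v, C, explicitE₂, add_zero, Real.one_rpow, neg_zero, zero_div, e_zero,
      Complex.ofReal_one, one_mul, mul_one]
    field_simp
    ring
  rw [← h_value]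
  refine h.congr' ((eventually_ge_atTop 0).mono fun T hT => integral_congr fun t ht => ?_)
  rw [uIcc_of_le hT] at ht
  simp only [u, Real.rpow_neg (by linarith [ht.1] : (0 : ℝ) ≤ 1 + t), ← Real.sqrt_eq_rpow]
  push_cast
  ring

end E2

theorem E2_derivative_bounds
    (E₂ : ℝ → ℂ)
    (hE₂ : ∀ z : ℝ, 0 < z →
      Tendsto (fun T : ℝ => ∫ t in (0 : ℝ)..T, e (-(t / z)) * ((Real.sqrt (1 + t))⁻¹ : ℂ))
        atTop (nhds (-2 * E₂ z))) :
    ContDiffOn ℝ (⊤ : ℕ∞) E₂ (Set.Ioi 0) ∧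
    ∀ n : ℕ, ∃ C : ℝ, ∀ z : ℝ, 0 < z → z ≤ 1 →
      ‖iteratedDerivWithin n E₂ (Set.Ioi 0) z‖ ≤ C * z ^ ((1 : ℤ) - n) := by
  have hE : EqOn E₂ E2.explicitE₂ (Ioi 0) := fun z hz =>
    mul_left_cancel₀ (by norm_num : (-2 : ℂ) ≠ 0)
      (tendsto_nhds_unique (hE₂ z hz) (E2.tendsto_intervalIntegral_e_neg_div_mul_inv_sqrt hz))
  refine ⟨contDiffOn_infty.2 fun m => (E2.kernelExpansion_explicitE₂.contDiffOn m).congr hE,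
    fun n => ?_⟩
  obtain ⟨g, hg, h_iter⟩ := E2.kernelExpansion_explicitE₂.exists_eqOn_iteratedDerivWithin n
  obtain ⟨C, hC⟩ := hg.exists_norm_le
  refine ⟨C, fun z hz hz1 => ?_⟩
  rw [iteratedDerivWithin_congr hE hz, h_iter hz]
  exact hC z hz hz1
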